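/- Let X be a nonnegative integrable real random variable with CDF F and generalized inverse F⁻(p) = inf{x : F(x) ≥ p}, and let X′ be an independent copy of X. Then 𝔼|X − X′| = 2 ∫_0^1 (2p − 1) F⁻(p) dp. -/

import Mathlib

/-!
Write `F = cdf μ` for the law `μ` of `X`. Since `|x - y| = x + y - 2 min x y`, the layer-cake
formula applied to `x` and to `min x y` under the joint law `μ ⊗ μ`, where
`(μ ⊗ μ){min > t} = (1 - F t)²`, gives `𝔼|X - X'| = 2 ∫_0^∞ F (1 - F)`. On the other side,
`F⁻ p = ∫_0^∞ 1{F t < p} dt` for `0 < p < 1`, so by Fubini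
`∫_0^1 (2p - 1) F⁻ p dp = ∫_0^∞ ∫_{F t}^1 (2p - 1) dp dt = ∫_0^∞ F (1 - F)`.
-/

open MeasureTheory ProbabilityTheory Set Filter Topology

namespace ProbabilityTheory

/-- For `p ∉ (0, 1)` the set may be empty or unbounded below, and `sInf` returns the junk `0`. -/
noncomputable def quantile (μ : Measure ℝ) (p : ℝ) : ℝ := sInf {x | p ≤ cdf μ x}

variable {μ : Measure ℝ}

lemma quantile_le_iff {p : ℝ} (hp : p ∈ Ioo 0 1) {t : ℝ} : quantile μ p ≤ t ↔ p ≤ cdf μ t := by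
  have hne : {x | p ≤ cdf μ x}.Nonempty :=
    ((tendsto_cdf_atTop μ).eventually (eventually_ge_nhds hp.2)).exists
  obtain ⟨x₀, hx₀⟩ := eventually_atBot.1
    ((tendsto_cdf_atBot μ).eventually (eventually_lt_nhds hp.1))
  have hbdd : BddBelow {x | p ≤ cdf μ x} :=
    ⟨x₀, fun x hx => le_of_not_gt fun hlt => (hx₀ x hlt.le).not_ge hx⟩
  refine ⟨fun h => ?_, fun h => csInf_le hbdd h⟩
  have hright : ∀ᶠ x in 𝓝[>] quantile μ p, p ≤ cdf μ x := by
    filter_upwards [self_mem_nhdsWithin] with x hx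
    obtain ⟨y, hy, hyx⟩ := exists_lt_of_csInf_lt hne hx
    exact hy.trans (monotone_cdf μ hyx.le)
  have hcont : Tendsto (cdf μ) (𝓝[>] quantile μ p) (𝓝 (cdf μ (quantile μ p))) :=
    ((cdf μ).right_continuous _).mono Ioi_subset_Ici_self
  exact (ge_of_tendsto hcont hright).trans (monotone_cdf μ h)

/-- The region `{(p, t) | 0 < p < 1, 0 < t < quantile μ p}`, written through the cdf so that its
slices in both directions are explicit. -/
def quantileRegion (μ : Measure ℝ) : Set (ℝ × ℝ) := {q | 0 < q.2 ∧ cdf μ q.2 < q.1 ∧ q.1 < 1}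

lemma measurableSet_quantileRegion : MeasurableSet (quantileRegion μ) :=
  (measurableSet_lt measurable_const measurable_snd).inter <|
    (measurableSet_lt ((monotone_cdf μ).measurable.comp measurable_snd) measurable_fst).inter <|
      measurableSet_lt measurable_fst measurable_const

lemma preimage_mk_quantileRegion {p : ℝ} (hp : p ∈ Ioo 0 1) :
    Prod.mk p ⁻¹' quantileRegion μ = Ioo 0 (quantile μ p) := by
  ext t
  simp only [quantileRegion, mem_preimage, mem_ofPred_eq, mem_Ioo, ← not_le,
    ← quantile_le_iff hp, not_le.2 hp.2, not_false_eq_true, and_true]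

lemma preimage_mk_quantileRegion_of_notMem {p : ℝ} (hp : p ∉ Ioo 0 1) :
    Prod.mk p ⁻¹' quantileRegion μ = ∅ := by
  refine eq_empty_of_forall_notMem fun t ⟨_, hlt, h1⟩ => hp ⟨?_, h1⟩
  exact (cdf_nonneg μ t).trans_lt hlt

lemma preimage_swap_mk_quantileRegion {t : ℝ} (ht : 0 < t) :
    (fun p => (p, t)) ⁻¹' quantileRegion μ = Ioo (cdf μ t) 1 := by
  ext p
  simp [quantileRegion, ht]

lemma preimage_swap_mk_quantileRegion_of_nonpos {t : ℝ} (ht : t ≤ 0) :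
    (fun p => (p, t)) ⁻¹' quantileRegion μ = ∅ :=
  eq_empty_of_forall_notMem fun _ h => ht.not_gt h.1

lemma integral_indicator_quantileRegion_swap_mk (t : ℝ) :
    ∫ p, (quantileRegion μ).indicator (fun q => 2 * q.1 - 1) (p, t)
      = (Ioi 0).indicator (fun t => cdf μ t * (1 - cdf μ t)) t := by
  change ∫ p, ((fun p => (p, t)) ⁻¹' quantileRegion μ).indicator (fun p => 2 * p - 1) p = _
  rw [integral_indicator (measurable_prodMk_right measurableSet_quantileRegion)]
  rcases le_or_gt t 0 with ht | ht
  · rw [preimage_swap_mk_quantileRegion_of_nonpos ht, Measure.restrict_empty,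
      integral_zero_measure, indicator_of_notMem (show t ∉ Ioi 0 from not_lt.2 ht)]
  · rw [preimage_swap_mk_quantileRegion ht, indicator_of_mem (show t ∈ Ioi 0 from ht),
      ← integral_Ioc_eq_integral_Ioo, ← intervalIntegral.integral_of_le (cdf_le_one μ t)]
    rw [intervalIntegral.integral_sub ((continuous_const_mul 2).intervalIntegrable _ _)
      intervalIntegrable_const, intervalIntegral.integral_const_mul, integral_id,
      intervalIntegral.integral_const, smul_eq_mul]
    ring

variable [IsProbabilityMeasure μ]

lemma one_sub_cdf_eq_measureReal_Ioi (t : ℝ) : 1 - cdf μ t = μ.real (Ioi t) := by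
  rw [cdf_eq_real, ← compl_Iic, probReal_compl_eq_one_sub measurableSet_Iic]

lemma cdf_eq_zero_of_neg (h0 : ∀ᵐ x ∂μ, 0 ≤ x) {x : ℝ} (hx : x < 0) : cdf μ x = 0 := by
  rw [cdf_eq_real, measureReal_eq_zero_iff]
  exact measure_mono_null (fun y (hy : y ≤ x) => not_le.2 (hy.trans_lt hx)) (ae_iff.1 h0)

lemma quantile_nonneg (h0 : ∀ᵐ x ∂μ, 0 ≤ x) {p : ℝ} (hp : p ∈ Ioo 0 1) : 0 ≤ quantile μ p := by
  by_contra! hneg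
  have := (quantile_le_iff (μ := μ) hp).1 le_rfl
  rw [cdf_eq_zero_of_neg h0 hneg] at this
  exact hp.1.not_ge this

lemma integrableOn_one_sub_cdf (h0 : ∀ᵐ x ∂μ, 0 ≤ x) (hi : Integrable id μ) :
    IntegrableOn (fun t => 1 - cdf μ t) (Ioi 0) := by
  refine ⟨((monotone_cdf μ).measurable.const_sub 1).aestronglyMeasurable, ?_⟩
  rw [hasFiniteIntegral_iff_ofReal (Eventually.of_forall fun t => sub_nonneg.2 (cdf_le_one μ t))]
  calc ∫⁻ t in Ioi 0, ENNReal.ofReal (1 - cdf μ t)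
      = ∫⁻ t in Ioi 0, μ {x | t < id x} := by
        simp only [one_sub_cdf_eq_measureReal_Ioi, measureReal_def,
          ENNReal.ofReal_toReal (measure_ne_top _ _)]
        rfl
    _ = ∫⁻ x, ENNReal.ofReal (id x) ∂μ :=
        (lintegral_eq_lintegral_meas_lt μ h0 hi.aemeasurable).symm
    _ < ⊤ := hi.lintegral_lt_top

lemma volume_quantileRegion_lt_top (h0 : ∀ᵐ x ∂μ, 0 ≤ x) (hi : Integrable id μ) :
    volume (quantileRegion μ) < ⊤ := by
  rw [Measure.volume_eq_prod, Measure.prod_apply_symm measurableSet_quantileRegion]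
  have hslice : ∀ t, volume ((fun p => (p, t)) ⁻¹' quantileRegion μ)
      = (Ioi 0).indicator (fun t => ENNReal.ofReal (1 - cdf μ t)) t := by
    intro t
    rcases le_or_gt t 0 with ht | ht
    · rw [preimage_swap_mk_quantileRegion_of_nonpos ht, measure_empty,
        indicator_of_notMem (show t ∉ Ioi 0 from not_lt.2 ht)]
    · rw [preimage_swap_mk_quantileRegion ht, Real.volume_Ioo,
        indicator_of_mem (show t ∈ Ioi 0 from ht)]
  simp_rw [hslice, lintegral_indicator measurableSet_Ioi]
  exact (integrableOn_one_sub_cdf h0 hi).lintegral_lt_top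

lemma integrable_indicator_quantileRegion (h0 : ∀ᵐ x ∂μ, 0 ≤ x) (hi : Integrable id μ) :
    Integrable ((quantileRegion μ).indicator fun q => 2 * q.1 - 1) (volume.prod volume) := by
  rw [← Measure.volume_eq_prod, integrable_indicator_iff measurableSet_quantileRegion]
  refine Measure.integrableOn_of_bounded (M := 1) (volume_quantileRegion_lt_top h0 hi).ne
    (by fun_prop) ?_
  filter_upwards [ae_restrict_mem measurableSet_quantileRegion] with q hq
  obtain ⟨-, hlt, h1⟩ := hq
  have := (cdf_nonneg μ q.2).trans_lt hlt
  rw [Real.norm_eq_abs, abs_le]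
  constructor <;> linarith

lemma integral_indicator_quantileRegion_mk (h0 : ∀ᵐ x ∂μ, 0 ≤ x) (p : ℝ) :
    ∫ t, (quantileRegion μ).indicator (fun q => 2 * q.1 - 1) (p, t)
      = (Ioo 0 1).indicator (fun p => (2 * p - 1) * quantile μ p) p := by
  change ∫ t, (Prod.mk p ⁻¹' quantileRegion μ).indicator (fun _ => 2 * p - 1) t = _
  rw [integral_indicator_const _ (measurable_prodMk_left measurableSet_quantileRegion),
    smul_eq_mul]
  by_cases hp : p ∈ Ioo 0 1
  · rw [preimage_mk_quantileRegion hp, Real.volume_real_Ioo_of_le (quantile_nonneg h0 hp),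
      indicator_of_mem hp, sub_zero, mul_comm]
  · rw [preimage_mk_quantileRegion_of_notMem hp, measureReal_empty, indicator_of_notMem hp,
      zero_mul]

lemma intervalIntegral_mul_quantile (h0 : ∀ᵐ x ∂μ, 0 ≤ x) (hi : Integrable id μ) :
    ∫ p in (0 : ℝ)..1, (2 * p - 1) * quantile μ p = ∫ t in Ioi 0, cdf μ t * (1 - cdf μ t) := by
  calc ∫ p in (0 : ℝ)..1, (2 * p - 1) * quantile μ p
      = ∫ p, ∫ t, (quantileRegion μ).indicator (fun q => 2 * q.1 - 1) (p, t) := by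
        simp_rw [integral_indicator_quantileRegion_mk h0, integral_indicator measurableSet_Ioo,
          intervalIntegral.integral_of_le zero_le_one, integral_Ioc_eq_integral_Ioo]
    _ = ∫ t, ∫ p, (quantileRegion μ).indicator (fun q => 2 * q.1 - 1) (p, t) :=
        integral_integral_swap (integrable_indicator_quantileRegion h0 hi)
    _ = ∫ t in Ioi 0, cdf μ t * (1 - cdf μ t) := by
        simp_rw [integral_indicator_quantileRegion_swap_mk, integral_indicator measurableSet_Ioi]

lemma integral_eq_integral_one_sub_cdf (h0 : ∀ᵐ x ∂μ, 0 ≤ x) (hi : Integrable id μ) :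
    ∫ x, x ∂μ = ∫ t in Ioi 0, (1 - cdf μ t) := by
  simp_rw [one_sub_cdf_eq_measureReal_Ioi]
  exact hi.integral_eq_integral_meas_lt h0

lemma integral_min_prod_self (h0 : ∀ᵐ x ∂μ, 0 ≤ x) (hi : Integrable id μ) :
    ∫ q, min q.1 q.2 ∂μ.prod μ = ∫ t in Ioi 0, (1 - cdf μ t) ^ 2 := by
  have hnonneg : 0 ≤ᵐ[μ.prod μ] fun q => min q.1 q.2 := by
    filter_upwards [Measure.quasiMeasurePreserving_fst.ae h0,
      Measure.quasiMeasurePreserving_snd.ae h0] with q h1 h2 using le_min h1 h2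
  have hmin : Integrable (fun q : ℝ × ℝ => min q.1 q.2) (μ.prod μ) :=
    (hi.comp_fst μ).inf (hi.comp_snd μ)
  rw [hmin.integral_eq_integral_meas_lt hnonneg]
  refine setIntegral_congr_fun measurableSet_Ioi fun t _ => ?_
  have hset : {q : ℝ × ℝ | t < min q.1 q.2} = Ioi t ×ˢ Ioi t := by
    ext q; simp
  rw [hset, measureReal_prod_prod, one_sub_cdf_eq_measureReal_Ioi, sq]

lemma integral_abs_sub_prod_self (h0 : ∀ᵐ x ∂μ, 0 ≤ x) (hi : Integrable id μ) :
    ∫ q, |q.1 - q.2| ∂μ.prod μ = 2 * ∫ t in Ioi 0, cdf μ t * (1 - cdf μ t) := by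
  have hG := integrableOn_one_sub_cdf h0 hi
  have hG2 : IntegrableOn (fun t => (1 - cdf μ t) ^ 2) (Ioi 0) := by
    refine hG.mono' (((monotone_cdf μ).measurable.const_sub 1).pow_const 2).aestronglyMeasurable
      (Eventually.of_forall fun t => ?_)
    have := cdf_nonneg μ t
    have := cdf_le_one μ t
    rw [Real.norm_eq_abs, abs_of_nonneg (sq_nonneg _)]
    nlinarith
  have hfst : Integrable (fun q : ℝ × ℝ => q.1) (μ.prod μ) := hi.comp_fst μ
  have hsnd : Integrable (fun q : ℝ × ℝ => q.2) (μ.prod μ) := hi.comp_snd μ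
  have hmin : Integrable (fun q : ℝ × ℝ => min q.1 q.2) (μ.prod μ) := hfst.inf hsnd
  calc ∫ q, |q.1 - q.2| ∂μ.prod μ = ∫ q, (q.1 + q.2 - 2 * min q.1 q.2) ∂μ.prod μ := by
        congr with q
        rw [← max_sub_min_eq_abs']
        linarith [min_add_max q.1 q.2]
    _ = 2 * (∫ t in Ioi 0, (1 - cdf μ t)) - 2 * ∫ t in Ioi 0, (1 - cdf μ t) ^ 2 := by
        rw [integral_sub (f := fun q => q.1 + q.2) (hfst.add hsnd) (hmin.const_mul 2),
          integral_add hfst hsnd, integral_const_mul, integral_fun_fst (fun x => x),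
          integral_fun_snd (fun x => x),
          integral_min_prod_self h0 hi, integral_eq_integral_one_sub_cdf h0 hi]
        simp only [probReal_univ, one_smul]
        ring
    _ = 2 * ∫ t in Ioi 0, cdf μ t * (1 - cdf μ t) := by
        rw [← mul_sub, ← integral_sub hG hG2]
        congr 2 with t
        ring

end ProbabilityTheory

theorem stmt_8
    {Ω : Type*} [MeasurableSpace Ω] (P : Measure Ω) [IsProbabilityMeasure P]
    (X X' : Ω → ℝ) (hX : Measurable X) (hX' : Measurable X')
    (hpos : ∀ ω, 0 ≤ X ω) (hint : Integrable X P)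
    (hindep : IndepFun X X' P)
    (hlaw : Measure.map X' P = Measure.map X P) :
    (∫ ω, |X ω - X' ω| ∂P)
      = 2 * ∫ p in (0 : ℝ)..1,
          (2 * p - 1) * sInf {x : ℝ | p ≤ (P {ω | X ω ≤ x}).toReal} := by
  set μ := P.map X
  have : IsProbabilityMeasure μ := Measure.isProbabilityMeasure_map hX.aemeasurable
  have h0 : ∀ᵐ x ∂μ, 0 ≤ x := (ae_map_iff hX.aemeasurable measurableSet_Ici).2 (ae_of_all _ hpos)
  have hi : Integrable id μ :=
    (integrable_map_measure aestronglyMeasurable_id hX.aemeasurable).2 hint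
  have hquantile (p : ℝ) : sInf {x | p ≤ (P {ω | X ω ≤ x}).toReal} = quantile μ p := by
    simp only [quantile, cdf_eq_real, measureReal_def, μ, Measure.map_apply hX measurableSet_Iic]
    rfl
  have hjoint : P.map (fun ω => (X ω, X' ω)) = μ.prod μ := by
    rw [(indepFun_iff_map_prod_eq_prod_map_map hX.aemeasurable hX'.aemeasurable).1 hindep, hlaw]
  simp_rw [hquantile, intervalIntegral_mul_quantile h0 hi, ← integral_abs_sub_prod_self h0 hi,
    ← hjoint]
  rw [integral_map (hX.prodMk hX').aemeasurable (by fun_prop)]
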